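/- Let A be a commutative integral domain and f₁,…,fₙ ∈ A. Then the ideal of inertia forms TF_{(Z)}((f₁−T₁Z, …, fₙ−TₙZ)) is a prime ideal of the polynomial ring A[T₁,…,Tₙ,Z]. -/

import Mathlib

/-!
Sending `Z ↦ Z` and `Tᵢ ↦ fᵢ / Z` defines a ring homomorphism `φ` from `A[T₁,…,Tₙ,Z]` to the
fraction field of `A[Z]`; it kills every `fᵢ - TᵢZ`, and its kernel is prime. Conversely, modulo
`I = (f₁ - T₁Z, …, fₙ - TₙZ)` we have `Z·Tᵢ ≡ fᵢ`, so a suitable power of `Z` times any polynomial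
is congruent to a polynomial in `A[Z]`, on which `φ` is injective. Hence `ker φ` consists exactly
of the polynomials that some power of `Z` multiplies into `I`, i.e. `ker φ = TF_{(Z)}(I)`.
-/

/-- The ideal of inertia forms (Trägheitsformen) of `I` with respect to `J`. -/
noncomputable def inertiaForms {R : Type*} [CommRing R] (J I : Ideal R) : Ideal R :=
  ⨆ n : ℕ, I.colon ((J ^ n : Ideal R) : Set R)

/-- The ideal `(f₁ - T₁Z, …, fₙ - TₙZ)` of `A[T₁,…,Tₙ][Z]`. -/
noncomputable def fTZIdeal {A : Type*} [CommRing A] {n : ℕ} (f : Fin n → A) :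
    Ideal (Polynomial (MvPolynomial (Fin n) A)) :=
  Ideal.span (Set.range fun i =>
    Polynomial.C (MvPolynomial.C (f i)) - Polynomial.C (MvPolynomial.X i) * Polynomial.X)

open Polynomial

theorem mem_inertiaForms_span_singleton_iff {R : Type*} [CommRing R] {I : Ideal R} {x a : R} :
    a ∈ inertiaForms (Ideal.span {x}) I ↔ ∃ N : ℕ, x ^ N * a ∈ I := by
  have hdir : Directed (· ≤ ·) fun N : ℕ => I.colon ((Ideal.span {x} ^ N : Ideal R) : Set R) :=
    Monotone.directed_le fun _ _ h => Submodule.colon_mono le_rfl (Ideal.pow_le_pow_right h)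
  rw [inertiaForms, Submodule.mem_iSup_of_directed _ hdir]
  refine exists_congr fun N => ?_
  rw [Ideal.span_singleton_pow, Submodule.mem_colon_span_singleton, smul_eq_mul, mul_comm]

theorem inertiaForms_span_singleton_eq_ker {R S D : Type*} [CommRing R] [CommRing S] [CommRing D]
    [NoZeroDivisors D] {I : Ideal R} {x : R} (φ : R →+* D) (ψ : S →+* R)
    (hI : I ≤ RingHom.ker φ) (hx : φ x ≠ 0) (hinj : Function.Injective (φ.comp ψ))
    (hgen : ∀ a, ∃ (N : ℕ) (s : S), x ^ N * a - ψ s ∈ I) :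
    inertiaForms (Ideal.span {x}) I = RingHom.ker φ := by
  ext a
  rw [mem_inertiaForms_span_singleton_iff, RingHom.mem_ker]
  constructor
  · rintro ⟨N, ha⟩
    have hφ : φ x ^ N * φ a = 0 := by simpa using hI ha
    exact (mul_eq_zero.mp hφ).resolve_left (pow_ne_zero N hx)
  · intro ha
    obtain ⟨N, s, hs⟩ := hgen a
    have hφs : φ (ψ s) = 0 := by simpa [ha] using hI hs
    obtain rfl : s = 0 := (injective_iff_map_eq_zero _).mp hinj s hφs
    exact ⟨N, by simpa using hs⟩

def Subring.powMulSaturation {R : Type*} [CommRing R] (B : Subring R) {x : R} (hx : x ∈ B) :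
    Subring R where
  carrier := {a | ∃ N : ℕ, x ^ N * a ∈ B}
  mul_mem' := by
    rintro a b ⟨M, ha⟩ ⟨N, hb⟩
    exact ⟨M + N, by convert B.mul_mem ha hb using 1; ring⟩
  one_mem' := ⟨0, by simp⟩
  add_mem' := by
    rintro a b ⟨M, ha⟩ ⟨N, hb⟩
    refine ⟨M + N, ?_⟩
    convert B.add_mem (B.mul_mem (B.pow_mem hx N) ha) (B.mul_mem (B.pow_mem hx M) hb) using 1
    ring
  zero_mem' := ⟨0, by simp⟩
  neg_mem' := by
    rintro a ⟨N, ha⟩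
    exact ⟨N, by simpa using B.neg_mem ha⟩

theorem Polynomial.mvPolynomial_subring_eq_top {σ A : Type*} [CommRing A]
    (S : Subring (MvPolynomial σ A)[X]) (hC : ∀ a, C (MvPolynomial.C a) ∈ S)
    (hT : ∀ i, C (MvPolynomial.X i) ∈ S) (hX : X ∈ S) : S = ⊤ := by
  refine (Subring.eq_top_iff' S).mpr fun p => ?_
  induction p using Polynomial.induction_on with
  | C t =>
    induction t using MvPolynomial.induction_on with
    | C a => exact hC a
    | add t u ht hu => simpa using S.add_mem ht hu
    | mul_X t i ht => simpa using S.mul_mem ht (hT i)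
  | add p q hp hq => exact S.add_mem hp hq
  | monomial k t ht =>
    rw [pow_succ, ← mul_assoc]
    exact S.mul_mem ht hX

section

variable {A : Type*} [CommRing A] {n : ℕ}

theorem exists_X_pow_mul_sub_map_C_mem_fTZIdeal (f : Fin n → A)
    (p : (MvPolynomial (Fin n) A)[X]) :
    ∃ (N : ℕ) (q : A[X]), X ^ N * p - q.map MvPolynomial.C ∈ fTZIdeal f := by
  let π := Ideal.Quotient.mk (fTZIdeal f)
  let ψ : A[X] →+* (MvPolynomial (Fin n) A)[X] := mapRingHom MvPolynomial.C
  let B : Subring ((MvPolynomial (Fin n) A)[X] ⧸ fTZIdeal f) := (π.comp ψ).range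
  have hXB : π X ∈ B := ⟨X, by simp [ψ]⟩
  have hS : (B.powMulSaturation hXB).comap π = ⊤ := by
    refine mvPolynomial_subring_eq_top _ (fun a => ⟨0, C a, by simp [ψ]⟩) (fun i => ?_)
      ⟨0, X, by simp [ψ]⟩
    refine ⟨1, C (f i), ?_⟩
    suffices C (MvPolynomial.C (f i)) - X * C (MvPolynomial.X i) ∈ fTZIdeal f by
      simpa [π, ψ, ← map_mul] using Ideal.Quotient.eq.mpr this
    rw [mul_comm]
    exact Ideal.subset_span ⟨i, rfl⟩
  obtain ⟨N, q, hq⟩ : p ∈ (B.powMulSaturation hXB).comap π := hS ▸ Subring.mem_top p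
  refine ⟨N, q, Ideal.Quotient.eq.mp ?_⟩
  simpa [π, ψ] using hq.symm

variable [IsDomain A]

noncomputable def fTZEval (f : Fin n → A) :
    (MvPolynomial (Fin n) A)[X] →+* FractionRing A[X] :=
  eval₂RingHom
    (MvPolynomial.eval₂Hom ((algebraMap A[X] _).comp C)
      fun i => algebraMap A[X] _ (C (f i)) / algebraMap A[X] _ X)
    (algebraMap A[X] _ X)

theorem algebraMap_X_ne_zero : algebraMap A[X] (FractionRing A[X]) X ≠ 0 :=
  (map_ne_zero_iff _ (IsFractionRing.injective _ _)).mpr X_ne_zero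

theorem fTZEval_X (f : Fin n → A) : fTZEval f X = algebraMap A[X] _ X :=
  eval₂_X _ _

theorem fTZIdeal_le_ker_fTZEval (f : Fin n → A) : fTZIdeal f ≤ RingHom.ker (fTZEval f) := by
  refine Ideal.span_le.mpr ?_
  rintro _ ⟨i, rfl⟩
  simp [fTZEval, div_mul_cancel₀ _ (algebraMap_X_ne_zero (A := A))]

theorem fTZEval_comp_mapRingHom_C (f : Fin n → A) :
    (fTZEval f).comp (mapRingHom MvPolynomial.C) = algebraMap A[X] (FractionRing A[X]) :=
  ringHom_ext (fun a => by simp [fTZEval]) (by simp [fTZEval])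

end

/-- if `A` is an integral domain, then the ideal of inertia forms
`TF_{(Z)}((f₁-T₁Z,…,fₙ-TₙZ))` is a prime ideal of `A[T₁,…,Tₙ,Z]`. -/
theorem statement3 {A : Type*} [CommRing A] [IsDomain A] (n : ℕ) (f : Fin n → A) :
    (inertiaForms (Ideal.span {(Polynomial.X : Polynomial (MvPolynomial (Fin n) A))})
      (fTZIdeal f)).IsPrime := by
  have hX : fTZEval f X ≠ 0 := fTZEval_X f ▸ algebraMap_X_ne_zero
  have hinj : Function.Injective ((fTZEval f).comp (mapRingHom MvPolynomial.C)) := by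
    rw [fTZEval_comp_mapRingHom_C]
    exact IsFractionRing.injective _ _
  rw [inertiaForms_span_singleton_eq_ker (fTZEval f) (mapRingHom MvPolynomial.C)
    (fTZIdeal_le_ker_fTZEval f) hX hinj (exists_X_pow_mul_sub_map_C_mem_fTZIdeal f)]
  exact RingHom.ker_isPrime _
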